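/- Let a, b ≥ 16 be integers and n = ab. Identify the n-element set with V = (ℤ/aℤ) × (ℤ/bℤ). Then the collection of all straight paths with 6 vertices in the toroidal grid C_a □ C_b — i.e., all sets of the form {(x+i, y) : i = 0,...,5} or {(x, y+j) : j = 0,...,5} for (x,y) ∈ V — is a resolving set for the Kneser graph K(n,6) on the ground set V. Consequently β(K(n,6)) ≤ 2n for such n. -/

import Mathlib

/-!
Two vertices `U ≠ W` of `K(n,6)` are resolved by any straight path `P` meeting exactly one of
them: `P` is adjacent (distance 1) to the one it misses and not to the other. So it suffices that
two 6-sets met by the same straight paths are equal.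

Along a line, if `d ∈ U \ W` then `U` meets the window of 6 just after `d`: otherwise `W` misses
it too, yet `W` meets the window starting at `d` away from `d`, i.e. inside it. Likewise before
`d`. So `U` contains `d` and two more points in each of its row and column, within distance 6
(distinct because `a, b > 12`). Two such crosses at distinct centres need 7 points, so
`U \ W = {d}` and `W \ U = {e}`; then the cross of `e` in `W` lies in `U`, giving `U` 7 points
again.
-/

/-- The Kneser graph `K(n,k)` on a ground set `X`: vertices are the `k`-element
subsets of `X`, two vertices adjacent iff the corresponding subsets are disjoint. -/
def kneserGraphOn (X : Type*) [DecidableEq X] (k : ℕ) :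
    SimpleGraph {s : Finset X // s.card = k} where
  Adj U W := U ≠ W ∧ Disjoint U.1 W.1
  symm := by
    constructor
    intro U W h
    exact ⟨h.1.symm, h.2.symm⟩
  loopless := by
    constructor
    intro U h
    exact h.1 rfl

/-- A set `S` of vertices is a resolving set for `G` if every pair of distinct
vertices is resolved by some vertex of `S`, i.e. is at different distances from it. -/
def resolvingSet {V : Type*} (G : SimpleGraph V) (S : Set V) : Prop :=
  ∀ u v : V, u ≠ v → ∃ x ∈ S, G.dist u x ≠ G.dist v x

/-- The metric dimension `β(G)`: the minimum cardinality of a resolving set for `G`. -/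
noncomputable def metricDim {V : Type*} (G : SimpleGraph V) : ℕ :=
  sInf {m | ∃ S : Finset V, resolvingSet G ↑S ∧ S.card = m}

open Finset

section Windows

variable {P Q : ℤ → Prop} {k : ℕ}

theorem exists_pos_of_windows_iff (hk : 0 < k)
    (h : ∀ s : ℤ, (∃ i < k, P (s + i)) ↔ ∃ i < k, Q (s + i)) (hP : P 0) (hQ : ¬Q 0) :
    ∃ c : ℤ, 0 < c ∧ c ≤ k ∧ P c := by
  by_contra! hne
  obtain ⟨j, hj, hQj⟩ := (h 0).1 ⟨0, hk, by simpa using hP⟩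
  have hj0 : j ≠ 0 := by rintro rfl; exact hQ (by simpa using hQj)
  obtain ⟨i, hi, hPi⟩ := (h 1).2
    ⟨j - 1, by omega, by rwa [show (1 : ℤ) + ↑(j - 1) = 0 + j by omega]⟩
  exact hne (1 + i) (by omega) (by omega) hPi

theorem exists_neg_of_windows_iff (hk : 0 < k)
    (h : ∀ s : ℤ, (∃ i < k, P (s + i)) ↔ ∃ i < k, Q (s + i)) (hP : P 0) (hQ : ¬Q 0) :
    ∃ c : ℤ, 0 < c ∧ c ≤ k ∧ P (-c) := by
  by_contra! hne
  have hlast : 1 - k + ↑(k - 1) = (0 : ℤ) := by omega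
  obtain ⟨j, hj, hQj⟩ := (h (1 - k)).1 ⟨k - 1, by omega, by rwa [hlast]⟩
  have hjk : j ≠ k - 1 := by rintro rfl; exact hQ (by rwa [hlast] at hQj)
  obtain ⟨i, hi, hPi⟩ := (h (-k)).2
    ⟨j + 1, by omega, by rwa [show -k + ↑(j + 1) = 1 - k + (j : ℤ) by omega]⟩
  exact hne (k - i) (by omega) (by omega) (by rwa [show -(k - i : ℤ) = -k + i by omega])

end Windows

section StraightPath

variable {G : Type*} [AddCommGroup G]

theorem zsmul_ne_zsmul_of_abs_sub_lt {g : G} {s t : ℤ} (hst : s ≠ t)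
    (h : |s - t| < addOrderOf g) : s • g ≠ t • g := by
  intro heq
  have hdvd : (addOrderOf g : ℤ) ∣ s - t := by
    rw [addOrderOf_dvd_iff_zsmul_eq_zero, sub_smul, heq, sub_self]
  exact hst (sub_eq_zero.mp (Int.eq_zero_of_abs_lt_dvd hdvd h))

variable [DecidableEq G]

def straightPath (p g : G) (k : ℕ) : Finset G :=
  univ.image fun i : Fin k => p + (i : ℕ) • g

theorem card_straightPath {p g : G} {k : ℕ} (hk : k ≤ addOrderOf g) :
    #(straightPath p g k) = k := by
  rw [straightPath, card_image_of_injective, card_univ, Fintype.card_fin]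
  intro i j hij
  exact Fin.ext <| nsmul_injOn_Iio_addOrderOf (by simp; omega) (by simp; omega)
    (add_left_cancel hij)

theorem not_disjoint_straightPath_iff {p g : G} {k : ℕ} {S : Finset G} :
    ¬Disjoint S (straightPath p g k) ↔ ∃ i < k, p + i • g ∈ S := by
  simp [straightPath, not_disjoint_iff, Fin.exists_iff, and_comm]

theorem one_lt_card_filter_sub_mem_zmultiples {U W : Finset G} {g d : G} {k : ℕ} (hk : 0 < k)
    (hg : 2 * k < addOrderOf g)
    (h : ∀ p, Disjoint U (straightPath p g k) ↔ Disjoint W (straightPath p g k))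
    (hdU : d ∈ U) (hdW : d ∉ W) :
    1 < #{u ∈ U | u ≠ d ∧ u - d ∈ AddSubgroup.zmultiples g} := by
  have hwin (s : ℤ) :
      (∃ i < k, d + (s + i) • g ∈ U) ↔ ∃ i < k, d + (s + i) • g ∈ W := by
    simp only [add_zsmul, natCast_zsmul, ← add_assoc, ← not_disjoint_straightPath_iff, h]
  obtain ⟨c, hc0, hck, hc⟩ := exists_pos_of_windows_iff (P := fun t => d + t • g ∈ U)
    (Q := fun t => d + t • g ∈ W) hk hwin (by simpa using hdU) (by simpa using hdW)
  obtain ⟨c', hc0', hck', hc'⟩ := exists_neg_of_windows_iff (P := fun t => d + t • g ∈ U)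
    (Q := fun t => d + t • g ∈ W) hk hwin (by simpa using hdU) (by simpa using hdW)
  have hne {s t : ℤ} (hst : s ≠ t) (hs : -k ≤ s ∧ s ≤ k) (ht : -k ≤ t ∧ t ≤ k) :
      d + s • g ≠ d + t • g := fun heq =>
    zsmul_ne_zsmul_of_abs_sub_lt hst (abs_lt.mpr ⟨by omega, by omega⟩) (add_left_cancel heq)
  have hmem {t : ℤ} (ht0 : t ≠ 0) (ht : -k ≤ t ∧ t ≤ k) (htU : d + t • g ∈ U) :
      d + t • g ∈ ({u ∈ U | u ≠ d ∧ u - d ∈ AddSubgroup.zmultiples g} : Finset G) :=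
    mem_filter.mpr ⟨htU, by simpa using hne ht0 ht (by simp), by simp⟩
  rw [one_lt_card]
  exact ⟨_, hmem (by omega) (by omega) hc, _, hmem (by omega) (by omega) hc',
    hne (by omega) (by omega) (by omega)⟩

end StraightPath

section Cross

variable {α β : Type*} [DecidableEq α] [DecidableEq β]

def HasCrossAt (S : Finset (α × β)) (r : α × β) : Prop :=
  1 < #{s ∈ S | s ≠ r ∧ s.2 = r.2} ∧ 1 < #{s ∈ S | s ≠ r ∧ s.1 = r.1}

variable {S T : Finset (α × β)} {p q : α × β}

theorem HasCrossAt.mono (h : HasCrossAt S p) (hST : ∀ s ∈ S, s ≠ p → s ∈ T) :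
    HasCrossAt T p := by
  have hsub (R : α × β → Prop) [DecidablePred R] :
      #{s ∈ S | s ≠ p ∧ R s} ≤ #{s ∈ T | s ≠ p ∧ R s} :=
    card_le_card fun s hs => by
      simp only [mem_filter] at hs ⊢
      exact ⟨hST s hs.1 hs.2.1, hs.2⟩
  exact ⟨h.1.trans_le (hsub _), h.2.trans_le (hsub _)⟩

theorem HasCrossAt.five_le_card_filter (h : HasCrossAt S p) (hp : p ∈ S) :
    5 ≤ #{s ∈ S | s.1 = p.1 ∨ s.2 = p.2} := by
  obtain ⟨hR, hC⟩ := h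
  set R := {s ∈ S | s ≠ p ∧ s.2 = p.2}
  set C := {s ∈ S | s ≠ p ∧ s.1 = p.1}
  have hRC : Disjoint R C := disjoint_filter.mpr fun s _ hs hs' => hs.1 (Prod.ext hs'.2 hs.2)
  have hp' : p ∉ R ∪ C := by simp [R, C]
  calc 5 ≤ #(R ∪ C) + 1 := by rw [card_union_of_disjoint hRC]; omega
    _ = #(insert p (R ∪ C)) := (card_insert_of_notMem hp').symm
    _ ≤ #{s ∈ S | s.1 = p.1 ∨ s.2 = p.2} := by
        refine card_le_card fun s hs => ?_
        simp only [R, C, mem_insert, mem_union, mem_filter] at hs ⊢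
        rcases hs with rfl | hs | hs <;> tauto

theorem HasCrossAt.two_le_card_filter_not (h : HasCrossAt S q) (hpq : p ≠ q) :
    2 ≤ #{s ∈ S | ¬(s.1 = p.1 ∨ s.2 = p.2)} := by
  obtain ⟨hR, hC⟩ := h
  by_cases h2 : q.2 = p.2
  · refine hC.trans_le (card_le_card fun s hs => ?_)
    simp only [mem_filter] at hs ⊢
    grind
  by_cases h1 : q.1 = p.1
  · refine hR.trans_le (card_le_card fun s hs => ?_)
    simp only [mem_filter] at hs ⊢
    grind
  -- the crosses of `p` and `q` now share only `(p.1, q.2)` and `(q.1, p.2)`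
  obtain ⟨u, hu, hup⟩ := exists_mem_ne hR (p.1, q.2)
  obtain ⟨w, hw, hwp⟩ := exists_mem_ne hC (q.1, p.2)
  simp only [mem_filter] at hu hw
  calc 2 = #{u, w} := (card_pair (by grind)).symm
    _ ≤ _ := card_le_card <| by
      simp only [insert_subset_iff, singleton_subset_iff, mem_filter]
      grind

theorem HasCrossAt.seven_le_card (hp : HasCrossAt S p) (hq : HasCrossAt S q) (hpS : p ∈ S)
    (hpq : p ≠ q) : 7 ≤ #S := by
  have := card_filter_add_card_filter_not (s := S) fun s => s.1 = p.1 ∨ s.2 = p.2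
  have := hp.five_le_card_filter hpS
  have := hq.two_le_card_filter_not hpq
  omega

end Cross

section Torus

variable {a b k : ℕ}

theorem addOrderOf_one_zero : addOrderOf ((1 : ZMod a), (0 : ZMod b)) = a := by
  simp [Prod.addOrderOf_mk]

theorem addOrderOf_zero_one : addOrderOf ((0 : ZMod a), (1 : ZMod b)) = b := by
  simp [Prod.addOrderOf_mk]

theorem straightPath_one_zero (x : ZMod a) (y : ZMod b) (k : ℕ) :
    straightPath (x, y) (1, 0) k = univ.image fun i : Fin k => (x + (i : ℕ), y) := by
  simp only [straightPath, Prod.smul_mk, nsmul_eq_mul, mul_one, smul_zero, Prod.mk_add_mk,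
    add_zero]

theorem straightPath_zero_one (x : ZMod a) (y : ZMod b) (k : ℕ) :
    straightPath (x, y) (0, 1) k = univ.image fun j : Fin k => (x, y + (j : ℕ)) := by
  simp only [straightPath, Prod.smul_mk, nsmul_eq_mul, mul_one, smul_zero, Prod.mk_add_mk,
    add_zero]

theorem hasCrossAt_of_mem_sdiff {U W : Finset (ZMod a × ZMod b)} (hk : 0 < k)
    (ha : 2 * k < a) (hb : 2 * k < b)
    (hrow : ∀ p, Disjoint U (straightPath p (1, 0) k) ↔ Disjoint W (straightPath p (1, 0) k))
    (hcol : ∀ p, Disjoint U (straightPath p (0, 1) k) ↔ Disjoint W (straightPath p (0, 1) k))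
    {d : ZMod a × ZMod b} (hdU : d ∈ U) (hdW : d ∉ W) : HasCrossAt U d := by
  have hR := one_lt_card_filter_sub_mem_zmultiples hk (addOrderOf_one_zero ▸ ha) hrow hdU hdW
  have hC := one_lt_card_filter_sub_mem_zmultiples hk (addOrderOf_zero_one ▸ hb) hcol hdU hdW
  refine ⟨hR.trans_le (card_le_card (monotone_filter_right _ ?_)),
    hC.trans_le (card_le_card (monotone_filter_right _ ?_))⟩ <;>
  · rintro u - ⟨hud, t, ht⟩
    simp only [Prod.ext_iff, Prod.smul_fst, Prod.smul_snd, smul_zero, Prod.fst_sub,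
      Prod.snd_sub] at ht
    exact ⟨hud, by grind⟩

theorem eq_of_forall_disjoint_straightPath_iff {U W : Finset (ZMod a × ZMod b)} (hk : 0 < k)
    (ha : 2 * k < a) (hb : 2 * k < b) (hcard : #U = #W) (hU : #U ≤ 6)
    (hrow : ∀ p, Disjoint U (straightPath p (1, 0) k) ↔ Disjoint W (straightPath p (1, 0) k))
    (hcol : ∀ p, Disjoint U (straightPath p (0, 1) k) ↔ Disjoint W (straightPath p (0, 1) k)) :
    U = W := by
  by_contra hne
  obtain ⟨d, hdU, hdW⟩ : ∃ d ∈ U, d ∉ W := not_subset.mp fun h =>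
    hne (eq_of_subset_of_card_le h hcard.ge)
  obtain ⟨e, heW, heU⟩ : ∃ e ∈ W, e ∉ U := not_subset.mp fun h =>
    hne (eq_of_subset_of_card_le h hcard.le).symm
  have hcrossW {s} (hsW : s ∈ W) (hsU : s ∉ U) : HasCrossAt W s :=
    hasCrossAt_of_mem_sdiff hk ha hb (fun p => (hrow p).symm) (fun p => (hcol p).symm) hsW hsU
  have hWU : ∀ s ∈ W, s ≠ e → s ∈ U := fun s hsW hse => by
    by_contra hsU
    have := (hcrossW hsW hsU).seven_le_card (hcrossW heW heU) hsW hse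
    omega
  have := (hasCrossAt_of_mem_sdiff hk ha hb hrow hcol hdU hdW).seven_le_card
    ((hcrossW heW heU).mono hWU) hdU (by rintro rfl; exact heU hdU)
  omega

end Torus

section Kneser

variable {X : Type*} [DecidableEq X] {k : ℕ}

theorem kneserGraphOn_dist_eq_one_iff (hk : 0 < k) {U W : {s : Finset X // s.card = k}} :
    (kneserGraphOn X k).dist U W = 1 ↔ Disjoint U.1 W.1 := by
  rw [SimpleGraph.dist_eq_one_iff_adj]
  refine ⟨And.right, fun h => ⟨?_, h⟩⟩
  rintro rfl
  rw [disjoint_self_iff_empty] at h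
  have := U.2
  simp [h] at this
  omega

theorem resolvingSet_kneserGraphOn (hk : 0 < k) {S : Set {s : Finset X // s.card = k}}
    (h : ∀ U W : {s : Finset X // s.card = k},
      (∀ P ∈ S, Disjoint U.1 P.1 ↔ Disjoint W.1 P.1) → U = W) :
    resolvingSet (kneserGraphOn X k) S := by
  intro U W hUW
  by_contra! hdist
  exact hUW <| h U W fun P hP => by
    rw [← kneserGraphOn_dist_eq_one_iff hk, ← kneserGraphOn_dist_eq_one_iff hk, hdist P hP]

end Kneser

theorem resolvingSet.mono {V : Type*} {G : SimpleGraph V} {S T : Set V} (h : resolvingSet G S)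
    (hST : S ⊆ T) : resolvingSet G T := fun u v huv =>
  let ⟨x, hx, hne⟩ := h u v huv
  ⟨x, hST hx, hne⟩

theorem metricDim_le_card_of_resolvingSet_range {V ι : Type*} [Fintype ι] {G : SimpleGraph V}
    (f : ι → V) (h : resolvingSet G (Set.range f)) : metricDim G ≤ Fintype.card ι := by
  classical
  calc metricDim G ≤ #(univ.image f) := Nat.sInf_le ⟨_, by simpa using h, rfl⟩
    _ ≤ Fintype.card ι := card_image_le

/-- For `a, b ≥ 16` and `n = ab`, the collection of all straight paths with 6
vertices in the toroidal grid `C_a □ C_b` is a resolving set for the Kneser graph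
`K(n,6)` on the ground set `(ℤ/aℤ) × (ℤ/bℤ)`; consequently `β(K(n,6)) ≤ 2n`. -/
theorem toroidal_grid_resolving_kneser_6 (a b : ℕ) (ha : 16 ≤ a) (hb : 16 ≤ b) :
    resolvingSet (kneserGraphOn (ZMod a × ZMod b) 6)
      {X | ∃ (x : ZMod a) (y : ZMod b),
        X.1 = Finset.image (fun i : Fin 6 => (x + (i : ℕ), y)) Finset.univ ∨
        X.1 = Finset.image (fun j : Fin 6 => (x, y + (j : ℕ))) Finset.univ} ∧
    metricDim (kneserGraphOn (ZMod a × ZMod b) 6) ≤ 2 * (a * b) := by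
  have : NeZero a := ⟨by omega⟩
  have : NeZero b := ⟨by omega⟩
  let f : (ZMod a × ZMod b) ⊕ (ZMod a × ZMod b) →
      {s : Finset (ZMod a × ZMod b) // s.card = 6} := Sum.elim
    (fun p => ⟨straightPath p (1, 0) 6, card_straightPath (by rw [addOrderOf_one_zero]; omega)⟩)
    (fun p => ⟨straightPath p (0, 1) 6, card_straightPath (by rw [addOrderOf_zero_one]; omega)⟩)
  have hres : resolvingSet (kneserGraphOn (ZMod a × ZMod b) 6) (Set.range f) :=
    resolvingSet_kneserGraphOn (by norm_num) fun U W h => Subtype.ext <|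
      eq_of_forall_disjoint_straightPath_iff (k := 6) (by norm_num) (by omega) (by omega)
        (U.2.trans W.2.symm) U.2.le (fun p => h (f (.inl p)) ⟨_, rfl⟩)
        (fun p => h (f (.inr p)) ⟨_, rfl⟩)
  refine ⟨hres.mono ?_, (metricDim_le_card_of_resolvingSet_range f hres).trans_eq ?_⟩
  · rintro _ ⟨(⟨x, y⟩ | ⟨x, y⟩), rfl⟩
    · exact ⟨x, y, Or.inl (straightPath_one_zero x y 6)⟩
    · exact ⟨x, y, Or.inr (straightPath_zero_one x y 6)⟩
  · simp only [Fintype.card_sum, Fintype.card_prod, ZMod.card]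
    ring
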